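/- arXiv:1405.1156 — 8 statements merged into one kernel-verified Lean document; each statement's English description precedes it below -/
import Mathlib

section
/- Fix 0 < p < 1, E > 0 and B_max > 0, and let {E_t}_{t≥0} be the i.i.d. Bernoulli energy arrival process (E_t = E with probability p, E_t = 0 otherwise). Then every feasible online policy g satisfies liminf_{N→∞} 𝔼[(1/N) Σ_{t=1}^N (1/2)·log₂(1 + g(t))] ≤ (1/2)·log₂(1 + p·min(B_max, E)). -/
open MeasureTheory ProbabilityTheory Filter

noncomputable section

variable {Ω : Type*} [MeasurableSpace Ω]

/-- The battery process: `B_0 = min(E_0, B_max)` and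
`B_{t+1} = min(B_t + E_{t+1} − g(t), B_max)`. -/
def battery (Bmax : ℝ) (Et : ℕ → Ω → ℝ) (g : ℕ → Ω → ℝ) : ℕ → Ω → ℝ
  | 0 => fun ω => min (Et 0 ω) Bmax
  | t + 1 => fun ω => min (battery Bmax Et g t ω + Et (t + 1) ω - g t ω) Bmax

/-- A feasible online policy: each `g(t)` is a measurable function of
`(E_0, …, E_t)` (causality), and `0 ≤ g(t) ≤ B_t` almost surely. -/
def FeasiblePolicy (μ : Measure Ω) (Bmax : ℝ) (Et : ℕ → Ω → ℝ)
    (g : ℕ → Ω → ℝ) : Prop :=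
  (∀ t, ∃ f : (Fin (t + 1) → ℝ) → ℝ, Measurable f ∧
      ∀ ω, g t ω = f fun i : Fin (t + 1) => Et i ω) ∧
  ∀ t, ∀ᵐ ω ∂μ, 0 ≤ g t ω ∧ g t ω ≤ battery Bmax Et g t ω

/-- The long-term average rate
`liminf_{N→∞} 𝔼[(1/N) Σ_{t=1}^N (1/2)·log₂(1 + g(t))]`. -/
def avgRate (μ : Measure Ω) (g : ℕ → Ω → ℝ) : ℝ :=
  liminf (fun N : ℕ =>
    ∫ ω, (1 / (N : ℝ)) * ∑ t ∈ Finset.Icc 1 N, (1 / 2) * Real.logb 2 (1 + g t ω) ∂μ)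
    atTop

/-- `{E_t}` is an i.i.d. Bernoulli energy arrival process: the `E_t` are measurable,
independent, and each `E_t` equals `E` with probability `p` and `0` with
probability `1 − p`. -/
def IsBernoulliArrival (μ : Measure Ω) (p E : ℝ) (Et : ℕ → Ω → ℝ) : Prop :=
  (∀ t, Measurable (Et t)) ∧
  iIndepFun Et μ ∧
  ∀ t, μ.map (Et t) =
    ENNReal.ofReal p • Measure.dirac E + ENNReal.ofReal (1 - p) • Measure.dirac 0

open Classical in
/-- The constant-fraction policy: `g'(t) = p(1−p)^j · A`, where
`j = t − max{t' ≤ t : E_{t'} = E}` is the number of time steps since the most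
recent energy arrival, and `g'(t) = 0` before the first arrival. -/
def constantFractionPolicy (p A E : ℝ) (Et : ℕ → Ω → ℝ) (t : ℕ) (ω : Ω) : ℝ :=
  if ∃ t' ≤ t, Et t' ω = E then
    p * (1 - p) ^ (t - sSup {t' | t' ≤ t ∧ Et t' ω = E}) * A
  else 0

end


/-!
Pathwise, the energy spent up to time `N` plus what is left in the battery never exceeds the
arrivals up to time `N`, each capped at `B_max`; taking expectations,
`∑_{t ≤ N} 𝔼 g(t) ≤ (N + 1) c` with `c = p · min(B_max, E)`. Since `log₂ (1 + x)` lies below its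
tangent line at `x = c`, which is affine, the expected average rate up to `N` is then at most
`½ log₂ (1 + c) + O(1/N)`.
-/

open Finset Real

theorem Real.log_le_log_add_sub_div {x c : ℝ} (hx : 0 < x) (hc : 0 < c) :
    log x ≤ log c + (x - c) / c := by
  have h := log_le_sub_one_of_pos (div_pos hx hc)
  rw [log_div hx.ne' hc.ne', div_sub_one hc.ne'] at h
  linarith

theorem Real.logb_le_logb_add_sub_div {b x c : ℝ} (hb : 1 < b) (hx : 0 < x) (hc : 0 < c) :
    logb b x ≤ logb b c + (x - c) / (c * log b) := by
  simp only [logb, ← div_div, ← add_div]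
  exact div_le_div_of_nonneg_right (log_le_log_add_sub_div hx hc) (log_pos hb).le

theorem integral_logb_one_add_le {Ω : Type*} [MeasurableSpace Ω] {μ : Measure Ω}
    [IsProbabilityMeasure μ] {b c : ℝ} (hb : 1 < b) (hc : 0 ≤ c) {f : Ω → ℝ}
    (hf : Integrable f μ) (hlog : Integrable (fun ω => logb b (1 + f ω)) μ)
    (hf0 : ∀ᵐ ω ∂μ, 0 ≤ f ω) :
    ∫ ω, logb b (1 + f ω) ∂μ ≤ logb b (1 + c) + ((∫ ω, f ω ∂μ) - c) / ((1 + c) * log b) := by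
  have hslope : Integrable (fun ω => (f ω - c) / ((1 + c) * log b)) μ :=
    (hf.sub (integrable_const c)).div_const _
  calc ∫ ω, logb b (1 + f ω) ∂μ
      ≤ ∫ ω, logb b (1 + c) + (f ω - c) / ((1 + c) * log b) ∂μ := by
        refine integral_mono_ae hlog ((integrable_const _).add hslope) ?_
        filter_upwards [hf0] with ω hω
        simpa using logb_le_logb_add_sub_div hb (by linarith : (0 : ℝ) < 1 + f ω)
          (by linarith : (0 : ℝ) < 1 + c)
    _ = _ := by
        rw [integral_add (integrable_const _) hslope, integral_div,
          integral_sub hf (integrable_const c)]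
        simp

section Battery

variable {Ω : Type*} {Bmax : ℝ} {Et g : ℕ → Ω → ℝ} {ω : Ω}

theorem battery_le (t : ℕ) (ω : Ω) : battery Bmax Et g t ω ≤ Bmax := by
  cases t <;> exact min_le_right _ _

theorem battery_succ_le {t : ℕ} (ht : g t ω ≤ battery Bmax Et g t ω) :
    battery Bmax Et g (t + 1) ω ≤
      battery Bmax Et g t ω - g t ω + min (Et (t + 1) ω) Bmax := by
  have hx : 0 ≤ battery Bmax Et g t ω - g t ω := sub_nonneg.2 ht
  calc battery Bmax Et g (t + 1) ω
      = min (battery Bmax Et g t ω - g t ω + Et (t + 1) ω) Bmax := by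
        simp only [battery, sub_add_eq_add_sub]
    _ ≤ min (battery Bmax Et g t ω - g t ω + Et (t + 1) ω)
          (battery Bmax Et g t ω - g t ω + Bmax) := min_le_min_left _ (le_add_of_nonneg_left hx)
    _ = _ := min_add_add_left _ _ _

theorem battery_add_sum_le (hg : ∀ t, g t ω ≤ battery Bmax Et g t ω) (N : ℕ) :
    battery Bmax Et g N ω + ∑ t ∈ range N, g t ω ≤
      ∑ s ∈ range (N + 1), min (Et s ω) Bmax := by
  induction N with
  | zero => simp [battery]
  | succ N ih =>
    rw [sum_range_succ, sum_range_succ (n := N + 1)]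
    linarith [battery_succ_le (hg N)]

theorem sum_le_sum_min_of_le_battery (hg : ∀ t, g t ω ≤ battery Bmax Et g t ω) (N : ℕ) :
    ∑ t ∈ range (N + 1), g t ω ≤ ∑ s ∈ range (N + 1), min (Et s ω) Bmax := by
  rw [sum_range_succ]
  linarith [battery_add_sum_le hg N, hg N]

end Battery

namespace IsBernoulliArrival

variable {Ω : Type*} [MeasurableSpace Ω] {μ : Measure Ω} {p E : ℝ} {Et : ℕ → Ω → ℝ}

theorem integrable_map (h : IsBernoulliArrival μ p E Et) (f : ℝ → ℝ) (t : ℕ) :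
    Integrable f (μ.map (Et t)) := by
  rw [h.2.2 t]
  exact ((integrable_dirac enorm_lt_top).smul_measure ENNReal.ofReal_ne_top).add_measure
    ((integrable_dirac enorm_lt_top).smul_measure ENNReal.ofReal_ne_top)

theorem integrable_comp (h : IsBernoulliArrival μ p E Et) {f : ℝ → ℝ} (hf : Measurable f)
    (t : ℕ) : Integrable (fun ω => f (Et t ω)) μ :=
  (integrable_map_measure hf.aestronglyMeasurable (h.1 t).aemeasurable).1 (h.integrable_map f t)

theorem integral_comp (h : IsBernoulliArrival μ p E Et) (hp : 0 ≤ p) {f : ℝ → ℝ}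
    (hf : Measurable f) (hf0 : f 0 = 0) (t : ℕ) : ∫ ω, f (Et t ω) ∂μ = p * f E := by
  have hmap := h.integrable_map f t
  rw [h.2.2 t] at hmap
  rw [← integral_map (h.1 t).aemeasurable hf.aestronglyMeasurable, h.2.2 t,
    integral_add_measure hmap.left_of_add_measure hmap.right_of_add_measure,
    integral_smul_measure, integral_smul_measure, integral_dirac, integral_dirac, hf0,
    ENNReal.toReal_ofReal hp, smul_eq_mul, smul_zero, add_zero]

end IsBernoulliArrival

namespace FeasiblePolicy

variable {Ω : Type*} [MeasurableSpace Ω] {μ : Measure Ω} {Bmax : ℝ} {Et g : ℕ → Ω → ℝ}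

theorem measurable (hg : FeasiblePolicy μ Bmax Et g) (hEt : ∀ t, Measurable (Et t)) (t : ℕ) :
    Measurable (g t) := by
  obtain ⟨f, hf, hfg⟩ := hg.1 t
  rw [funext hfg]
  exact hf.comp (measurable_pi_lambda _ fun i => hEt i)

theorem integrable [IsFiniteMeasure μ] (hg : FeasiblePolicy μ Bmax Et g)
    (hEt : ∀ t, Measurable (Et t)) (t : ℕ) : Integrable (g t) μ := by
  refine (integrable_const Bmax).mono' (hg.measurable hEt t).aestronglyMeasurable ?_
  filter_upwards [hg.2 t] with ω h
  rw [Real.norm_eq_abs, abs_of_nonneg h.1]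
  exact h.2.trans (battery_le t ω)

theorem integrable_logb_one_add [IsFiniteMeasure μ] (hg : FeasiblePolicy μ Bmax Et g)
    (hEt : ∀ t, Measurable (Et t)) (t : ℕ) :
    Integrable (fun ω => logb 2 (1 + g t ω)) μ := by
  have hmeas : Measurable fun ω => log (1 + g t ω) / log 2 :=
    ((hg.measurable hEt t).const_add 1).log.div_const _
  refine (integrable_const (logb 2 (1 + Bmax))).mono' hmeas.aestronglyMeasurable ?_
  filter_upwards [hg.2 t] with ω h
  rw [Real.norm_eq_abs, abs_of_nonneg (logb_nonneg one_lt_two (by linarith))]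
  exact logb_le_logb_of_le one_lt_two (by linarith) (by linarith [h.2.trans (battery_le t ω)])

variable [IsProbabilityMeasure μ] {p E : ℝ}

theorem sum_integral_le (hg : FeasiblePolicy μ Bmax Et g) (hEt : IsBernoulliArrival μ p E Et)
    (hp : 0 ≤ p) (hB : 0 ≤ Bmax) (N : ℕ) :
    ∑ t ∈ range (N + 1), ∫ ω, g t ω ∂μ ≤ (N + 1) * (p * min Bmax E) := by
  have hle : ∀ᵐ ω ∂μ, ∀ t, g t ω ≤ battery Bmax Et g t ω :=
    ae_all_iff.2 fun t => (hg.2 t).mono fun _ h => h.2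
  have hmin : Measurable fun x : ℝ => min x Bmax := measurable_id.min measurable_const
  have hint : ∀ s, Integrable (fun ω => min (Et s ω) Bmax) μ := hEt.integrable_comp hmin
  calc ∑ t ∈ range (N + 1), ∫ ω, g t ω ∂μ
      = ∫ ω, ∑ t ∈ range (N + 1), g t ω ∂μ :=
        (integral_finsetSum _ fun t _ => hg.integrable hEt.1 t).symm
    _ ≤ ∫ ω, ∑ s ∈ range (N + 1), min (Et s ω) Bmax ∂μ :=
        integral_mono_ae (integrable_finsetSum _ fun t _ => hg.integrable hEt.1 t)
          (integrable_finsetSum _ fun s _ => hint s)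
          (hle.mono fun _ h => sum_le_sum_min_of_le_battery h N)
    _ = ∑ s ∈ range (N + 1), p * min E Bmax := by
        rw [integral_finsetSum _ fun s _ => hint s]
        exact sum_congr rfl fun s _ => hEt.integral_comp hp hmin (min_eq_left hB) s
    _ = (N + 1) * (p * min Bmax E) := by simp [min_comm]

theorem integral_avg_rate_le (hg : FeasiblePolicy μ Bmax Et g)
    (hEt : IsBernoulliArrival μ p E Et) (hp : 0 ≤ p) (hE : 0 ≤ E) (hB : 0 ≤ Bmax) {N : ℕ}
    (hN : 0 < N) :
    ∫ ω, (1 / (N : ℝ)) * ∑ t ∈ Icc 1 N, (1 / 2) * logb 2 (1 + g t ω) ∂μ ≤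
      (1 / 2) * logb 2 (1 + p * min Bmax E) +
        p * min Bmax E / (2 * ((1 + p * min Bmax E) * log 2)) / N := by
  set c := p * min Bmax E
  set D := (1 + c) * log 2
  have hc : 0 ≤ c := mul_nonneg hp (le_min hB hE)
  have hD : 0 < D := mul_pos (by linarith) (log_pos one_lt_two)
  have hNpos : (0 : ℝ) < N := Nat.cast_pos.2 hN
  have htangent : ∀ t,
      ∫ ω, logb 2 (1 + g t ω) ∂μ ≤ logb 2 (1 + c) + ((∫ ω, g t ω ∂μ) - c) / D := fun t =>
    integral_logb_one_add_le one_lt_two hc (hg.integrable hEt.1 t)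
      (hg.integrable_logb_one_add hEt.1 t) ((hg.2 t).mono fun _ h => h.1)
  have henergy : ∑ t ∈ Icc 1 N, ∫ ω, g t ω ∂μ ≤ (N + 1) * c :=
    (sum_le_sum_of_subset_of_nonneg
      (fun t ht => mem_range.2 (Nat.lt_succ_of_le (mem_Icc.1 ht).2))
      fun t _ _ => integral_nonneg_of_ae ((hg.2 t).mono fun _ h => h.1)).trans
      (hg.sum_integral_le hEt hp hB N)
  have hsum : ∑ t ∈ Icc 1 N, (1 / 2) * (logb 2 (1 + c) + ((∫ ω, g t ω ∂μ) - c) / D) =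
      (1 / 2) * (N * logb 2 (1 + c) + ((∑ t ∈ Icc 1 N, ∫ ω, g t ω ∂μ) - N * c) / D) := by
    rw [← mul_sum, sum_add_distrib, ← sum_div, sum_sub_distrib]
    simp
  calc ∫ ω, (1 / (N : ℝ)) * ∑ t ∈ Icc 1 N, (1 / 2) * logb 2 (1 + g t ω) ∂μ
      = (1 / (N : ℝ)) * ∑ t ∈ Icc 1 N, (1 / 2) * ∫ ω, logb 2 (1 + g t ω) ∂μ := by
        rw [integral_const_mul, integral_finsetSum _ fun t _ =>
          (hg.integrable_logb_one_add hEt.1 t).const_mul _]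
        simp only [integral_const_mul]
    _ ≤ (1 / (N : ℝ)) * ∑ t ∈ Icc 1 N,
          (1 / 2) * (logb 2 (1 + c) + ((∫ ω, g t ω ∂μ) - c) / D) := by
        gcongr with t
        exact htangent t
    _ ≤ (1 / 2) * logb 2 (1 + c) + c / (2 * D) / N := by
        rw [hsum]
        field_simp
        nlinarith

end FeasiblePolicy

theorem online_policy_upper_bound_general
    {Ω : Type*} [MeasurableSpace Ω] (μ : Measure Ω) [IsProbabilityMeasure μ]
    (p E Bmax : ℝ) (hp0 : 0 < p) (hE : 0 < E) (hB0 : 0 < Bmax)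
    (Et : ℕ → Ω → ℝ) (hEt : IsBernoulliArrival μ p E Et)
    (g : ℕ → Ω → ℝ) (hg : FeasiblePolicy μ Bmax Et g) :
    avgRate μ g ≤ (1 / 2) * Real.logb 2 (1 + p * min Bmax E) := by
  set L := (1 / 2) * logb 2 (1 + p * min Bmax E)
  set K := p * min Bmax E / (2 * ((1 + p * min Bmax E) * log 2))
  have hrate : ∀ᶠ N : ℕ in atTop,
      ∫ ω, (1 / (N : ℝ)) * ∑ t ∈ Icc 1 N, (1 / 2) * logb 2 (1 + g t ω) ∂μ ≤ L + K / N :=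
    eventually_atTop.2 ⟨1, fun N hN =>
      hg.integral_avg_rate_le hEt hp0.le hE.le hB0.le hN⟩
  have hlim : Tendsto (fun N : ℕ => L + K / N) atTop (nhds L) := by
    simpa using tendsto_const_nhds.add (tendsto_const_div_atTop_nhds_zero_nat K)
  have hbdd : IsBoundedUnder (· ≥ ·) atTop fun N : ℕ =>
      ∫ ω, (1 / (N : ℝ)) * ∑ t ∈ Icc 1 N, (1 / 2) * logb 2 (1 + g t ω) ∂μ := by
    refine isBoundedUnder_of ⟨0, fun N => integral_nonneg_of_ae ?_⟩
    filter_upwards [ae_all_iff.2 hg.2] with ω h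
    exact mul_nonneg (by positivity) (sum_nonneg fun t _ =>
      mul_nonneg (by norm_num) (logb_nonneg one_lt_two (by linarith [(h t).1])))
  exact (liminf_le_liminf hrate hbdd hlim.isCoboundedUnder_ge).trans_eq hlim.liminf_eq

/-- For `0 < p < 1`, `E > 0`, `B_max > 0` and an i.i.d. Bernoulli energy
arrival process, every feasible online policy `g` satisfies
`liminf_{N→∞} 𝔼[(1/N) Σ_{t=1}^N (1/2)·log₂(1 + g(t))] ≤ (1/2)·log₂(1 + p·min(B_max, E))`. -/
theorem online_policy_upper_bound
    {Ω : Type*} [MeasurableSpace Ω] (μ : Measure Ω) [IsProbabilityMeasure μ]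
    (p E Bmax : ℝ) (hp0 : 0 < p) (hp1 : p < 1) (hE : 0 < E) (hB0 : 0 < Bmax)
    (Et : ℕ → Ω → ℝ) (hEt : IsBernoulliArrival μ p E Et)
    (g : ℕ → Ω → ℝ) (hg : FeasiblePolicy μ Bmax Et g) :
    avgRate μ g ≤ (1 / 2) * Real.logb 2 (1 + p * min Bmax E) :=
  online_policy_upper_bound_general μ p E Bmax hp0 hE hB0 Et hEt g hg
end

section
/- Fix 0 < p < 1, E > 0 and 0 < B_max ≤ E, and let {E_t}_{t≥0} be the i.i.d. Bernoulli energy arrival process (E_t = E with probability p, E_t = 0 otherwise). The constant-fraction policy g'(t) = p(1−p)^j · B_max, where j = t − max{t' ≤ t : E_{t'} = E} (and g'(t) = 0 before the first arrival), satisfies liminf_{N→∞} 𝔼[(1/N) Σ_{t=1}^N (1/2)·log₂(1 + g'(t))] ≥ Σ_{j=0}^∞ p(1−p)^j · (1/2)·log₂(1 + p(1−p)^j · B_max). -/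
open MeasureTheory ProbabilityTheory Filter

/-! Up to time `t`, the events "the last arrival was at time `a`" (`a ≤ t`) are disjoint, and on
each of them the policy is the constant `p(1-p)^(t-a)·B_max`; by independence such an event has
probability `p(1-p)^(t-a)`. So the expected rate in slot `t` is the `t`-th partial sum of the
series, and the Cesàro means of the partial sums of a convergent series tend to its sum: the
liminf is a limit and equals the series. -/

open Finset Topology Asymptotics

theorem Filter.Tendsto.cesaro_Icc {u : ℕ → ℝ} {l : ℝ} (h : Tendsto u atTop (𝓝 l)) :
    Tendsto (fun N : ℕ => (N : ℝ)⁻¹ * ∑ t ∈ Icc 1 N, u t) atTop (𝓝 l) := by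
  refine (h.comp (tendsto_add_atTop_nat 1)).cesaro.congr fun N => ?_
  rw [← Ico_add_one_right_eq_Icc, sum_Ico_eq_sum_range]
  simp [add_comm]

theorem ProbabilityTheory.iIndepFun.measure_preimage_inter_biInter_preimage
    {Ω ι β : Type*} [MeasurableSpace Ω] [MeasurableSpace β] [DecidableEq ι] {μ : Measure Ω}
    {f : ι → Ω → β} (hf : iIndepFun f μ) {a : ι} {S : Finset ι} (ha : a ∉ S)
    {A B : Set β} (hA : MeasurableSet A) (hB : MeasurableSet B) :
    μ (f a ⁻¹' A ∩ ⋂ s ∈ S, f s ⁻¹' B) = μ (f a ⁻¹' A) * ∏ s ∈ S, μ (f s ⁻¹' B) := by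
  have key := hf.measure_inter_preimage_eq_mul (insert a S)
    (sets := Function.update (fun _ => B) a A) fun i _ => by
      by_cases h : i = a
      · subst h; simpa using hA
      · simpa [h] using hB
  have hS : ∀ s ∈ S, Function.update (fun _ => B) a A s = B := fun s hs =>
    Function.update_of_ne (ne_of_mem_of_not_mem hs ha) _ _
  rwa [set_biInter_insert, prod_insert ha, Function.update_self,
    Set.iInter₂_congr fun s hs => by rw [hS s hs],
    prod_congr rfl fun s hs => by rw [hS s hs]] at key

theorem summable_geometric_mul_comp {p A : ℝ} (hp0 : 0 < p) (hp1 : p < 1) {φ : ℝ → ℝ}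
    (hφ : ContinuousAt φ 0) :
    Summable fun j : ℕ => p * (1 - p) ^ j * φ (p * (1 - p) ^ j * A) := by
  have hgeom : Tendsto (fun j : ℕ => (1 - p) ^ j) atTop (𝓝 0) :=
    tendsto_pow_atTop_nhds_zero_of_lt_one (by linarith) (by linarith)
  have hφ_tendsto : Tendsto (fun j : ℕ => φ (p * (1 - p) ^ j * A)) atTop (𝓝 (φ 0)) := by
    refine hφ.tendsto.comp ?_
    simpa using (hgeom.const_mul p).mul_const A
  refine summable_of_isBigO_nat
    ((summable_geometric_of_lt_one (r := 1 - p) (by linarith) (by linarith)).mul_left p) ?_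
  simpa using (isBigO_refl (fun j : ℕ => p * (1 - p) ^ j) atTop).mul (hφ_tendsto.isBigO_one ℝ)


section

variable {Ω : Type*}

def lastArrivalAt (E : ℝ) (Et : ℕ → Ω → ℝ) (t a : ℕ) : Set Ω :=
  Et a ⁻¹' {E} ∩ ⋂ s ∈ Ioc a t, Et s ⁻¹' {E}ᶜ

variable {p A E : ℝ} {Et : ℕ → Ω → ℝ} {t a : ℕ} {ω : Ω}

theorem sSup_eq_of_mem_lastArrivalAt (ha : a ≤ t) (hω : ω ∈ lastArrivalAt E Et t a) :
    sSup {t' | t' ≤ t ∧ Et t' ω = E} = a := by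
  simp only [lastArrivalAt, Set.mem_inter_iff, Set.mem_preimage, Set.mem_singleton_iff,
    Set.mem_iInter, Set.mem_compl_iff, mem_Ioc] at hω
  refine IsGreatest.csSup_eq ⟨⟨ha, hω.1⟩, fun s ⟨hst, hs⟩ => ?_⟩
  by_contra! has
  exact hω.2 s ⟨has, hst⟩ hs

theorem sSup_mem_lastArrivalAt (h : ∃ t' ≤ t, Et t' ω = E) :
    sSup {t' | t' ≤ t ∧ Et t' ω = E} ≤ t ∧
      ω ∈ lastArrivalAt E Et t (sSup {t' | t' ≤ t ∧ Et t' ω = E}) := by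
  have hbdd : BddAbove {t' | t' ≤ t ∧ Et t' ω = E} := ⟨t, fun _ hs => hs.1⟩
  obtain ⟨hMt, hME⟩ := Nat.sSup_mem h hbdd
  refine ⟨hMt, hME, Set.mem_iInter₂.2 fun s hs hsE => ?_⟩
  exact (mem_Ioc.1 hs).1.not_ge (le_csSup hbdd ⟨(mem_Ioc.1 hs).2, hsE⟩)

theorem comp_constantFractionPolicy_eq_sum_indicator {φ : ℝ → ℝ} (hφ : φ 0 = 0) :
    φ (constantFractionPolicy p A E Et t ω) =
      ∑ a ∈ range (t + 1),
        (lastArrivalAt E Et t a).indicator (fun _ => φ (p * (1 - p) ^ (t - a) * A)) ω := by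
  classical
  by_cases h : ∃ t' ≤ t, Et t' ω = E
  · obtain ⟨hMt, hM⟩ := sSup_mem_lastArrivalAt h
    rw [sum_eq_single_of_mem _ (mem_range_succ_iff.2 hMt), Set.indicator_of_mem hM,
      constantFractionPolicy, if_pos h]
    intro a ha haM
    refine Set.indicator_of_notMem (fun hω => haM ?_) _
    exact (sSup_eq_of_mem_lastArrivalAt (mem_range_succ_iff.1 ha) hω).symm
  · rw [constantFractionPolicy, if_neg h, hφ, eq_comm]
    refine sum_eq_zero fun a ha => Set.indicator_of_notMem (fun hω => h ?_) _
    exact ⟨a, mem_range_succ_iff.1 ha, hω.1⟩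

variable [MeasurableSpace Ω] {μ : Measure Ω}

theorem measurableSet_lastArrivalAt (hm : ∀ t, Measurable (Et t)) :
    MeasurableSet (lastArrivalAt E Et t a) :=
  (hm a (measurableSet_singleton E)).inter <|
    measurableSet_biInter _ fun s _ => hm s (measurableSet_singleton E).compl

namespace IsBernoulliArrival

theorem measure_preimage_singleton (h : IsBernoulliArrival μ p E Et) (hE : E ≠ 0) (s : ℕ) :
    μ (Et s ⁻¹' {E}) = ENNReal.ofReal p := by
  rw [← Measure.map_apply (h.1 s) (measurableSet_singleton E), h.2.2 s]
  simp [hE.symm]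

theorem measure_preimage_compl_singleton (h : IsBernoulliArrival μ p E Et) (hE : E ≠ 0)
    (s : ℕ) : μ (Et s ⁻¹' {E}ᶜ) = ENNReal.ofReal (1 - p) := by
  rw [← Measure.map_apply (h.1 s) (measurableSet_singleton E).compl, h.2.2 s]
  simp [hE.symm]

theorem measure_lastArrivalAt (h : IsBernoulliArrival μ p E Et) (hE : E ≠ 0) :
    μ (lastArrivalAt E Et t a) = ENNReal.ofReal p * ENNReal.ofReal (1 - p) ^ (t - a) := by
  rw [lastArrivalAt, h.2.1.measure_preimage_inter_biInter_preimage (by simp)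
    (measurableSet_singleton E) (measurableSet_singleton E).compl,
    h.measure_preimage_singleton hE,
    prod_congr rfl fun s _ => h.measure_preimage_compl_singleton hE s, prod_const, Nat.card_Ioc]

end IsBernoulliArrival

theorem integrable_comp_constantFractionPolicy [IsFiniteMeasure μ] (hm : ∀ t, Measurable (Et t))
    {φ : ℝ → ℝ} (hφ : φ 0 = 0) :
    Integrable (fun ω => φ (constantFractionPolicy p A E Et t ω)) μ := by
  simp_rw [comp_constantFractionPolicy_eq_sum_indicator hφ]
  exact integrable_finsetSum _ fun a _ =>
    (integrable_const _).indicator (measurableSet_lastArrivalAt hm)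

theorem integral_comp_constantFractionPolicy [IsFiniteMeasure μ]
    (h : IsBernoulliArrival μ p E Et) (hE : E ≠ 0) (hp0 : 0 ≤ p) (hp1 : p ≤ 1)
    {φ : ℝ → ℝ} (hφ : φ 0 = 0) :
    ∫ ω, φ (constantFractionPolicy p A E Et t ω) ∂μ =
      ∑ j ∈ range (t + 1), p * (1 - p) ^ j * φ (p * (1 - p) ^ j * A) := by
  simp_rw [comp_constantFractionPolicy_eq_sum_indicator hφ]
  rw [integral_finsetSum _ fun a _ =>
    (integrable_const _).indicator (measurableSet_lastArrivalAt h.1)]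
  simp_rw [integral_indicator_const _ (measurableSet_lastArrivalAt h.1), measureReal_def,
    h.measure_lastArrivalAt hE, ENNReal.toReal_mul, ENNReal.toReal_pow,
    ENNReal.toReal_ofReal hp0, ENNReal.toReal_ofReal (sub_nonneg.2 hp1), smul_eq_mul]
  -- reindex by `j = t - a`, the time elapsed since the last arrival
  exact sum_range_reflect (fun j => p * (1 - p) ^ j * φ (p * (1 - p) ^ j * A)) (t + 1)

theorem avgRate_eq_tsum {g : ℕ → Ω → ℝ} {f : ℕ → ℝ} (hf : Summable f)
    (hint : ∀ t, Integrable (fun ω => 1 / 2 * Real.logb 2 (1 + g t ω)) μ)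
    (hg : ∀ t, ∫ ω, 1 / 2 * Real.logb 2 (1 + g t ω) ∂μ = ∑ j ∈ range (t + 1), f j) :
    avgRate μ g = ∑' j, f j := by
  refine Tendsto.liminf_eq <|
    (hf.hasSum.tendsto_sum_nat.comp (tendsto_add_atTop_nat 1)).cesaro_Icc.congr fun N => ?_
  rw [integral_const_mul, integral_finsetSum _ fun t _ => hint t, one_div]
  simp only [Function.comp_apply, hg]

end

theorem constant_fraction_policy_rate_lower_bound_general
    {Ω : Type*} [MeasurableSpace Ω] (μ : Measure Ω) [IsProbabilityMeasure μ]
    (p E Bmax : ℝ) (hp0 : 0 < p) (hp1 : p < 1) (hE : 0 < E)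
    (Et : ℕ → Ω → ℝ) (hEt : IsBernoulliArrival μ p E Et) :
    avgRate μ (constantFractionPolicy p Bmax E Et) ≥
      ∑' j : ℕ, p * (1 - p) ^ j *
        ((1 / 2) * Real.logb 2 (1 + p * (1 - p) ^ j * Bmax)) := by
  let rate : ℝ → ℝ := fun x => 1 / 2 * Real.logb 2 (1 + x)
  have hrate0 : rate 0 = 0 := by simp [rate]
  have hrate : ContinuousAt rate 0 :=
    continuousAt_const.mul <| (continuousAt_const.add continuousAt_id).logb (by simp)
  refine (avgRate_eq_tsum (summable_geometric_mul_comp hp0 hp1 hrate)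
    (fun t => integrable_comp_constantFractionPolicy (φ := rate) hEt.1 hrate0) fun t => ?_).ge
  exact integral_comp_constantFractionPolicy (φ := rate) hEt hE.ne' hp0.le hp1.le hrate0

/-- For `0 < p < 1`, `E > 0`, `0 < B_max ≤ E` and an i.i.d. Bernoulli
energy arrival process, the constant-fraction policy `g'(t) = p(1−p)^j·B_max`
satisfies
`liminf_{N→∞} 𝔼[(1/N) Σ_{t=1}^N (1/2)·log₂(1 + g'(t))]
  ≥ Σ_{j=0}^∞ p(1−p)^j·(1/2)·log₂(1 + p(1−p)^j·B_max)`. -/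
theorem constant_fraction_policy_rate_lower_bound
    {Ω : Type*} [MeasurableSpace Ω] (μ : Measure Ω) [IsProbabilityMeasure μ]
    (p E Bmax : ℝ) (hp0 : 0 < p) (hp1 : p < 1) (hE : 0 < E)
    (hB0 : 0 < Bmax) (hBE : Bmax ≤ E)
    (Et : ℕ → Ω → ℝ) (hEt : IsBernoulliArrival μ p E Et) :
    avgRate μ (constantFractionPolicy p Bmax E Et) ≥
      ∑' j : ℕ, p * (1 - p) ^ j *
        ((1 / 2) * Real.logb 2 (1 + p * (1 - p) ^ j * Bmax)) :=
  constant_fraction_policy_rate_lower_bound_general μ p E Bmax hp0 hp1 hE Et hEt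
end

section
/- For every real p with 0 < p < 1 and every real B > 0, (1/2)·log₂(1 + pB) − Σ_{j=0}^∞ p(1−p)^j · (1/2)·log₂(1 + p(1−p)^j · B) ≤ 0.973. -/
/-!
Write `q = 1 - p` and `x = p B`; the weights `p qʲ` form a probability distribution on `ℕ`
with mean `q / p`. Since `1 + x ≤ q⁻ʲ (1 + qʲ x)`, replacing `x` by `qʲ x` costs at most
`j · log (1/q)` nats, so the gap is at most `(q / p) · log (1/q) ≤ 1` nat, by `log y ≤ y - 1`.
With the factor `1/2` and the change to bits this is `1 / (2 log 2) < 0.973`.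
-/

open Real

namespace Real

theorem log_one_add_sub_log_one_add_pow_mul_le {q x : ℝ} (hq0 : 0 < q) (hq1 : q ≤ 1)
    (hx : 0 ≤ x) (n : ℕ) : log (1 + x) - log (1 + q ^ n * x) ≤ -(n * log q) := by
  have hqn : 0 < q ^ n := pow_pos hq0 n
  have hle : 1 + x ≤ (1 + q ^ n * x) / q ^ n := by
    rw [le_div_iff₀ hqn]
    nlinarith [pow_le_one₀ hq0.le hq1 (n := n)]
  have hlog : log ((1 + q ^ n * x) / q ^ n) = log (1 + q ^ n * x) - n * log q := by
    rw [log_div (by positivity) hqn.ne', log_pow]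
  linarith [log_le_log (by positivity) hle]

theorem neg_mul_log_le_one_sub {q : ℝ} (hq : 0 < q) : -(q * log q) ≤ 1 - q := by
  have h := one_sub_inv_le_log_of_pos hq
  have : q * (1 - q⁻¹) = q - 1 := by field_simp
  nlinarith

theorem log_one_add_sub_tsum_geometric_le_one {q x : ℝ} (hq0 : 0 < q) (hq1 : q < 1)
    (hx : 0 ≤ x) :
    log (1 + x) - ∑' j : ℕ, (1 - q) * q ^ j * log (1 + q ^ j * x) ≤ 1 := by
  set w : ℕ → ℝ := fun j => (1 - q) * q ^ j
  have hw : ∀ j, 0 ≤ w j := fun j => mul_nonneg (by linarith) (pow_nonneg hq0.le j)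
  have hw_sum : HasSum w 1 := by
    have := (hasSum_geometric_of_lt_one hq0.le hq1).mul_left (1 - q)
    rwa [mul_inv_cancel₀ (by linarith)] at this
  have hjw_sum : HasSum (fun j : ℕ => j * w j) (q / (1 - q)) := by
    have h := (hasSum_coe_mul_geometric_of_norm_lt_one
      (by rwa [norm_of_nonneg hq0.le] : ‖q‖ < 1)).mul_left (1 - q)
    rw [show (1 - q) * (q / (1 - q) ^ 2) = q / (1 - q) by
      field_simp [sub_ne_zero.mpr hq1.ne']] at h
    exact h.congr_fun fun j => by simp only [w]; ring
  have hloss : ∀ j : ℕ, log (1 + x) - log (1 + q ^ j * x) ≤ -(j * log q) :=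
    log_one_add_sub_log_one_add_pow_mul_le hq0 hq1.le hx
  have hmono : ∀ j : ℕ, 0 ≤ log (1 + q ^ j * x) ∧ log (1 + q ^ j * x) ≤ log (1 + x) :=
    fun j => ⟨log_nonneg (by nlinarith [pow_nonneg hq0.le j]),
      log_le_log (by positivity) (by nlinarith [pow_le_one₀ hq0.le hq1.le (n := j)])⟩
  have hsummable : Summable fun j => w j * log (1 + q ^ j * x) :=
    (hw_sum.summable.mul_right (log (1 + x))).of_nonneg_of_le
      (fun j => mul_nonneg (hw j) (hmono j).1)
      (fun j => mul_le_mul_of_nonneg_left (hmono j).2 (hw j))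
  have hgap : HasSum (fun j => w j * (log (1 + x) - log (1 + q ^ j * x)))
      (log (1 + x) - ∑' j, w j * log (1 + q ^ j * x)) := by
    simpa [mul_sub] using (hw_sum.mul_right (log (1 + x))).sub hsummable.hasSum
  have hbound : HasSum (fun j : ℕ => -log q * (j * w j)) (-log q * (q / (1 - q))) :=
    hjw_sum.mul_left (-log q)
  calc log (1 + x) - ∑' j, w j * log (1 + q ^ j * x)
      ≤ -log q * (q / (1 - q)) :=
        hasSum_le (fun j => by nlinarith [mul_le_mul_of_nonneg_left (hloss j) (hw j)])
          hgap hbound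
    _ = -(q * log q) / (1 - q) := by ring
    _ ≤ 1 := by
        rw [div_le_one (by linarith)]
        exact neg_mul_log_le_one_sub hq0

end Real

/-- For every real `p` with `0 < p < 1` and every real `B > 0`,
`(1/2)·log₂(1 + pB) − Σ_{j=0}^∞ p(1−p)^j · (1/2)·log₂(1 + p(1−p)^j·B) ≤ 0.973`. -/
theorem constant_gap_bound (p B : ℝ) (hp0 : 0 < p) (hp1 : p < 1) (hB : 0 < B) :
    (1 / 2) * Real.logb 2 (1 + p * B) -
      ∑' j : ℕ, p * (1 - p) ^ j * ((1 / 2) * Real.logb 2 (1 + p * (1 - p) ^ j * B)) ≤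
      0.973 := by
  have hnats := log_one_add_sub_tsum_geometric_le_one (q := 1 - p) (x := p * B)
    (by linarith) (by linarith) (by positivity)
  rw [sub_sub_cancel] at hnats
  have hlog2 : 0.6931471803 < log 2 := log_two_gt_d9
  have hbits : (1 / 2) * logb 2 (1 + p * B) -
      ∑' j : ℕ, p * (1 - p) ^ j * ((1 / 2) * logb 2 (1 + p * (1 - p) ^ j * B)) =
      (log (1 + p * B) - ∑' j : ℕ, p * (1 - p) ^ j * log (1 + (1 - p) ^ j * (p * B))) /
        (2 * log 2) := by
    simp only [logb, sub_div, ← tsum_div_const]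
    congr 1
    · ring
    · congr 1; ext j; ring_nf
  rw [hbits, div_le_iff₀ (by positivity)]
  nlinarith
end

section
/- For every real p with 0 < p < 1 and every real B > 0, (1/2)·log₂(1 + pB) − Σ_{j=0}^∞ p(1−p)^j · (1/2)·log₂(1 + p(1−p)^j · B) ≤ (1/2)·log₂(1 + 1/(pB)) + ((1−p)/(2p))·log₂(1/(1−p)). -/
/-!
Since `log₂(1 + x) ≥ log₂ x`, each term of the series is at least
`p(1−p)^j · (1/2)·(log₂(pB) + j·log₂(1−p))`. Under the geometric weights `p(1−p)^j` the index `j`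
has total mass `1` and mean `(1−p)/p`, so the series is at least
`(1/2)·log₂(pB) + ((1−p)/(2p))·log₂(1−p)`, and subtracting this from `(1/2)·log₂(1 + pB)` gives
the right-hand side.
-/

open Real

section GeometricWeights

variable {p : ℝ}

lemma hasSum_geometric_weights (hp0 : 0 < p) (hp1 : p ≤ 1) :
    HasSum (fun j : ℕ => p * (1 - p) ^ j) 1 := by
  have h := (hasSum_geometric_of_lt_one (r := 1 - p) (by linarith) (by linarith)).mul_left p
  rwa [sub_sub_cancel, mul_inv_cancel₀ hp0.ne'] at h

lemma hasSum_geometric_weights_mul_nat (hp0 : 0 < p) (hp1 : p < 1) :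
    HasSum (fun j : ℕ => p * (1 - p) ^ j * j) ((1 - p) / p) := by
  have hq : ‖1 - p‖ < 1 := by rw [Real.norm_eq_abs, abs_lt]; constructor <;> linarith
  have h := (hasSum_coe_mul_geometric_of_norm_lt_one hq).mul_left p
  have hval : p * ((1 - p) / (1 - (1 - p)) ^ 2) = (1 - p) / p := by
    rw [sub_sub_cancel]; field_simp
  rw [hval] at h
  exact h.congr_fun fun j => by ring

lemma hasSum_geometric_weights_mul_affine (hp0 : 0 < p) (hp1 : p < 1) (a c : ℝ) :
    HasSum (fun j : ℕ => p * (1 - p) ^ j * (a + j * c)) (a + (1 - p) / p * c) := by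
  have h := ((hasSum_geometric_weights hp0 hp1.le).mul_right a).add
    ((hasSum_geometric_weights_mul_nat hp0 hp1).mul_right c)
  rw [one_mul] at h
  exact h.congr_fun fun j => by ring

lemma hasSum_geometric_weights_mul_logb (b : ℝ) (hp0 : 0 < p) (hp1 : p < 1) {x : ℝ}
    (hx : 0 < x) :
    HasSum (fun j : ℕ => p * (1 - p) ^ j * logb b (x * (1 - p) ^ j))
      (logb b x + (1 - p) / p * logb b (1 - p)) := by
  convert hasSum_geometric_weights_mul_affine hp0 hp1 (logb b x) (logb b (1 - p)) using 3 with j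
  rw [logb_mul hx.ne' (pow_pos (by linarith) j).ne', logb_pow]

lemma summable_geometric_weights_mul_logb_one_add {b : ℝ} (hb : 1 < b) (hp0 : 0 < p)
    (hp1 : p ≤ 1) {x : ℝ} (hx : 0 ≤ x) :
    Summable (fun j : ℕ => p * (1 - p) ^ j * logb b (1 + x * (1 - p) ^ j)) := by
  have hq : 0 ≤ 1 - p := by linarith
  refine ((hasSum_geometric_weights hp0 hp1).summable.mul_right (logb b (1 + x))).of_nonneg_of_le
    (fun j => ?_) (fun j => ?_)
  · have hxj : 0 ≤ x * (1 - p) ^ j := by positivity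
    exact mul_nonneg (by positivity) (logb_nonneg hb (by linarith))
  · gcongr
    exact mul_le_of_le_one_right hx (pow_le_one₀ hq (by linarith))

end GeometricWeights

lemma logb_one_add_one_div (b : ℝ) {x : ℝ} (hx : 0 < x) :
    logb b (1 + 1 / x) = logb b (1 + x) - logb b x := by
  rw [← logb_div (by linarith) hx.ne', add_div, div_self hx.ne', add_comm]

/-- For every real `p` with `0 < p < 1` and every real `B > 0`,
`(1/2)·log₂(1 + pB) − Σ_{j=0}^∞ p(1−p)^j·(1/2)·log₂(1 + p(1−p)^j·B)
  ≤ (1/2)·log₂(1 + 1/(pB)) + ((1−p)/(2p))·log₂(1/(1−p))`. -/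
theorem gap_upper_bound (p B : ℝ) (hp0 : 0 < p) (hp1 : p < 1) (hB : 0 < B) :
    (1 / 2) * Real.logb 2 (1 + p * B) -
      ∑' j : ℕ, p * (1 - p) ^ j * ((1 / 2) * Real.logb 2 (1 + p * (1 - p) ^ j * B)) ≤
      (1 / 2) * Real.logb 2 (1 + 1 / (p * B)) +
        ((1 - p) / (2 * p)) * Real.logb 2 (1 / (1 - p)) := by
  have hpB : 0 < p * B := mul_pos hp0 hB
  have hlower := (hasSum_geometric_weights_mul_logb 2 hp0 hp1 hpB).mul_left (1 / 2)
  have hseries :=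
    ((summable_geometric_weights_mul_logb_one_add one_lt_two hp0 hp1.le hpB.le).mul_left
      (1 / 2)).hasSum
  have htermwise (j : ℕ) :
      1 / 2 * (p * (1 - p) ^ j * logb 2 (p * B * (1 - p) ^ j)) ≤
        1 / 2 * (p * (1 - p) ^ j * logb 2 (1 + p * B * (1 - p) ^ j)) := by
    have hx : 0 < p * B * (1 - p) ^ j := mul_pos hpB (pow_pos (by linarith) j)
    have hlog := logb_le_logb_of_le one_lt_two hx (le_add_of_nonneg_left zero_le_one)
    have hweight : 0 ≤ p * (1 - p) ^ j := mul_nonneg hp0.le (pow_nonneg (by linarith) j)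
    gcongr
  have hle := hasSum_le htermwise hlower hseries
  simp only [mul_right_comm p B, mul_left_comm (1 / 2 : ℝ)] at hle
  rw [logb_one_add_one_div 2 hpB, one_div (1 - p), logb_inv]
  have hcoef : (1 - p) / (2 * p) = 1 / 2 * ((1 - p) / p) := by ring
  rw [hcoef]
  linarith
end

section
/- For every real p with 0 < p < 1 and every real B > 0, define C_ub(B, p) = (1/2)·log₂(1 + pB) and C_lb(B, p) = max(0, Σ_{j=0}^∞ p(1−p)^j · (1/2)·log₂(1 + p(1−p)^j · B) − 1.04 − H(p)), where H(p) = −p·log₂ p − (1−p)·log₂(1−p) is the binary entropy function. Then C_ub(B, p) − C_lb(B, p) ≤ 2.58. -/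
/-!
Bounding each `log₂(1 + p(1−p)^j B)` from below by `log₂(1 + pB) + j·log₂(1−p)` turns the series
into `½·log₂(1 + pB) + ½·log₂(1−p)·(1−p)/p`, so the upper bound cancels and the gap is at most
`1.04 + H(p) − ½·log₂(1−p)·(1−p)/p`. The last two terms stay below `1.54` for all `p ∈ (0, 1)`
(their maximum is about `1.524`); this follows from a third-order rational upper bound for `−log`
at `1`.
-/

open Real

section GeometricWeights

variable {p : ℝ}

theorem hasSum_geometric_weight_affine (hp0 : 0 < p) (hp1 : p ≤ 1) (L M : ℝ) :
    HasSum (fun j : ℕ => p * (1 - p) ^ j * (L + j * M)) (L + M * ((1 - p) / p)) := by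
  have hq : ‖1 - p‖ < 1 := by rw [norm_of_nonneg (by linarith)]; linarith
  have hgeo :=
    (hasSum_geometric_of_lt_one (by linarith : 0 ≤ 1 - p) (by linarith)).mul_left (p * L)
  have hlin := (hasSum_coe_mul_geometric_of_norm_lt_one hq).mul_left (p * M)
  rw [sub_sub_cancel] at hgeo hlin
  have hsum : L + M * ((1 - p) / p) = p * L * p⁻¹ + p * M * ((1 - p) / p ^ 2) := by
    field_simp [hp0.ne']
  rw [hsum]
  exact (hgeo.add hlin).congr_fun fun j => by ring

theorem le_tsum_geometric_weight {L M : ℝ} {f : ℕ → ℝ} (hp0 : 0 < p) (hp1 : p ≤ 1)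
    (hlow : ∀ j : ℕ, L + j * M ≤ f j) (hup : ∀ j : ℕ, f j ≤ L) :
    L + M * ((1 - p) / p) ≤ ∑' j : ℕ, p * (1 - p) ^ j * f j := by
  have hw : ∀ j : ℕ, 0 ≤ p * (1 - p) ^ j := fun j => by
    have : 0 ≤ 1 - p := by linarith
    positivity
  have haff := hasSum_geometric_weight_affine hp0 hp1 L M
  have hconst := hasSum_geometric_weight_affine hp0 hp1 L 0
  have hgap : Summable fun j : ℕ => p * (1 - p) ^ j * f j - p * (1 - p) ^ j * (L + j * M) :=
    Summable.of_nonneg_of_le (fun j => sub_nonneg.2 (mul_le_mul_of_nonneg_left (hlow j) (hw j)))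
      (fun j => by simpa using mul_le_mul_of_nonneg_left (hup j) (hw j))
      (hconst.summable.sub haff.summable)
  have hf : Summable fun j : ℕ => p * (1 - p) ^ j * f j :=
    (hgap.add haff.summable).congr fun j => by ring
  exact hasSum_le (fun j => mul_le_mul_of_nonneg_left (hlow j) (hw j)) haff hf.hasSum

end GeometricWeights

section LogBounds

variable {b x q : ℝ}

theorem logb_one_add_mul_pow_le (hb : 1 < b) (hx : 0 ≤ x) (hq0 : 0 ≤ q) (hq1 : q ≤ 1) (j : ℕ) :
    logb b (1 + x * q ^ j) ≤ logb b (1 + x) := by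
  have hqj : q ^ j ≤ 1 := pow_le_one₀ hq0 hq1
  exact logb_le_logb_of_le hb (by positivity) (by nlinarith [pow_nonneg hq0 j])

theorem logb_one_add_add_mul_logb_le (hb : 1 < b) (hx : 0 ≤ x) (hq0 : 0 < q) (hq1 : q ≤ 1)
    (j : ℕ) : logb b (1 + x) + j * logb b q ≤ logb b (1 + x * q ^ j) := by
  have hqj : q ^ j ≤ 1 := pow_le_one₀ hq0.le hq1
  rw [← logb_pow, ← logb_mul (by positivity) (by positivity)]
  exact logb_le_logb_of_le hb (by positivity) (by nlinarith [pow_pos hq0 j])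

/-- The right-hand side plus `log y` has derivative `(y − 1)³ / (y²(y + 2)²)`: it vanishes to
fourth order at `y = 1` and decreases on `(0, 1]`. -/
theorem neg_log_le_rational (hx0 : 0 < x) (hx1 : x ≤ 1) :
    -log x ≤ 1 / (4 * x) + 27 / (4 * (x + 2)) - 5 / 2 := by
  set g : ℝ → ℝ := fun y => log y + (1 / (4 * y) + 27 / (4 * (y + 2)) - 5 / 2)
  have hg : ∀ y : ℝ, 0 < y → HasDerivAt g ((y - 1) ^ 3 / (y ^ 2 * (y + 2) ^ 2)) y := by
    intro y hy
    have h1 := ((hasDerivAt_id' y).const_mul 4).inv (by positivity : (4 : ℝ) * y ≠ 0)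
    have h2 := ((((hasDerivAt_id' y).add_const 2).const_mul 4).inv
      (by positivity : (4 : ℝ) * (y + 2) ≠ 0)).const_mul 27
    refine ((hasDerivAt_log hy.ne').fun_add ((h1.fun_add h2).sub_const (5 / 2))).congr_deriv ?_
      |>.congr_of_eventuallyEq (.of_forall fun z => ?_)
    · field_simp; ring
    · simp [g, div_eq_mul_inv]
  have hanti : AntitoneOn g (Set.Icc x 1) := by
    apply antitoneOn_of_deriv_nonpos (convex_Icc x 1)
    · exact fun y hy => (hg y (hx0.trans_le hy.1)).continuousAt.continuousWithinAt
    · rw [interior_Icc]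
      exact fun y hy => (hg y (hx0.trans hy.1)).differentiableAt.differentiableWithinAt
    · rw [interior_Icc]
      intro y hy
      rw [(hg y (hx0.trans hy.1)).deriv]
      exact div_nonpos_of_nonpos_of_nonneg
        (Odd.pow_nonpos ⟨1, rfl⟩ (by linarith [hy.2])) (by positivity)
  have hgx := hanti ⟨le_rfl, hx1⟩ ⟨hx1, le_rfl⟩ hx1
  have hg1 : g 1 = 0 := by norm_num [g]
  simp only [g, hg1] at hgx
  linarith

end LogBounds

section Entropy

variable {p : ℝ}

theorem rational_entropy_bound_le (hp0 : 0 < p) (hp1 : p < 1) :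
    p * (1 / (4 * p) + 27 / (4 * (p + 2)) - 5 / 2) +
      ((1 - p) + (1 - p) / (2 * p)) * (1 / (4 * (1 - p)) + 27 / (4 * ((1 - p) + 2)) - 5 / 2) ≤
      1.0674 := by
  have h3 : 0 < 3 - p := by linarith
  have h4 : 0 < 1 - p := by linarith
  rw [← sub_nonneg]
  have hid : (1.0674 : ℝ) -
      (p * (1 / (4 * p) + 27 / (4 * (p + 2)) - 5 / 2) +
        ((1 - p) + (1 - p) / (2 * p)) * (1 / (4 * (1 - p)) + 27 / (4 * ((1 - p) + 2)) - 5 / 2)) =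
      (58413 * p ^ 2 - 47163 * p + 9522) / (5000 * ((p + 2) * (3 - p))) := by
    rw [show (1 - p) + 2 = 3 - p by ring]
    field_simp
    ring
  rw [hid]
  -- the quadratic has negative discriminant
  have hquad : 0 ≤ 58413 * p ^ 2 - 47163 * p + 9522 := by
    nlinarith [sq_nonneg (116826 * p - 47163)]
  positivity

theorem entropy_add_neg_log_mul_le (hp0 : 0 < p) (hp1 : p < 1) :
    p * -log p + ((1 - p) + (1 - p) / (2 * p)) * -log (1 - p) ≤ 1.0674 := by
  have hw : 0 ≤ (1 - p) + (1 - p) / (2 * p) := by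
    have : 0 ≤ 1 - p := by linarith
    positivity
  have hp := mul_le_mul_of_nonneg_left (neg_log_le_rational hp0 hp1.le) hp0.le
  have hq := mul_le_mul_of_nonneg_left
    (neg_log_le_rational (by linarith : 0 < 1 - p) (by linarith)) hw
  linarith [rational_entropy_bound_le hp0 hp1]

theorem binary_entropy_sub_half_logb_mul_le (hp0 : 0 < p) (hp1 : p < 1) :
    -((1 / 2) * logb 2 (1 - p)) * ((1 - p) / p) +
      (-(p * logb 2 p) - (1 - p) * logb 2 (1 - p)) ≤ 1.54 := by
  have hlog2 : 0.6931471803 < log 2 := log_two_gt_d9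
  have hnats : -((1 / 2) * logb 2 (1 - p)) * ((1 - p) / p) +
      (-(p * logb 2 p) - (1 - p) * logb 2 (1 - p)) =
      (p * -log p + ((1 - p) + (1 - p) / (2 * p)) * -log (1 - p)) / log 2 := by
    simp only [logb]
    field_simp
    ring
  rw [hnats, div_le_iff₀ (by linarith)]
  nlinarith [entropy_add_neg_log_mul_le hp0 hp1]

end Entropy

/-- With `C_ub(B,p) = (1/2)·log₂(1+pB)` and
`C_lb(B,p) = max(0, Σ_{j=0}^∞ p(1−p)^j·(1/2)·log₂(1+p(1−p)^j·B) − 1.04 − H(p))`,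
where `H(p) = −p·log₂ p − (1−p)·log₂(1−p)`, we have `C_ub − C_lb ≤ 2.58`. -/
theorem capacity_constant_gap (p B : ℝ) (hp0 : 0 < p) (hp1 : p < 1) (hB : 0 < B) :
    (1 / 2) * Real.logb 2 (1 + p * B) -
      max 0
        ((∑' j : ℕ, p * (1 - p) ^ j * ((1 / 2) * Real.logb 2 (1 + p * (1 - p) ^ j * B))) -
          1.04 - (-(p * Real.logb 2 p) - (1 - p) * Real.logb 2 (1 - p))) ≤
      2.58 := by
  have hpB : 0 ≤ p * B := by positivity
  have hseries : (1 / 2) * logb 2 (1 + p * B) + (1 / 2) * logb 2 (1 - p) * ((1 - p) / p) ≤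
      ∑' j : ℕ, p * (1 - p) ^ j * ((1 / 2) * logb 2 (1 + p * (1 - p) ^ j * B)) := by
    refine le_tsum_geometric_weight hp0 hp1.le (fun j => ?_) (fun j => ?_) <;>
      rw [mul_right_comm p]
    · linarith [logb_one_add_add_mul_logb_le (q := 1 - p) one_lt_two hpB
        (by linarith) (by linarith) j]
    · linarith [logb_one_add_mul_pow_le (q := 1 - p) one_lt_two hpB (by linarith) (by linarith) j]
  refine (sub_le_sub_left (le_max_right _ _) _).trans ?_
  linarith [binary_entropy_sub_half_logb_mul_le hp0 hp1]
end

section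
/- Let 0 ≤ A₁ < A₂ and let F be the cumulative distribution function of the uniform distribution on [A₁, A₂], i.e. F(x) = 0 for x < A₁, F(x) = (x − A₁)/(A₂ − A₁) for A₁ ≤ x ≤ A₂, and F(x) = 1 for x > A₂. Then for every B with A₁ ≤ B < (A₁ + A₂)/2: ∫₀^B (1 − F(y)) dy ≤ 2 · B · (1 − F(B)). -/
/-!
Since `0 ≤ F ≤ 1`, the integral of `1 - F` over `[0, B]` is at most `B`; and `B` lies below the
median `(A₁ + A₂) / 2` of the distribution, so `1 - F B > 1 / 2` and `B < 2 * B * (1 - F B)`.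
-/

noncomputable section

def uniformCdf (A₁ A₂ x : ℝ) : ℝ :=
  if x < A₁ then 0 else if x ≤ A₂ then (x - A₁) / (A₂ - A₁) else 1

theorem uniformCdf_mem_Icc (A₁ A₂ x : ℝ) : uniformCdf A₁ A₂ x ∈ Set.Icc 0 1 := by
  unfold uniformCdf
  split_ifs with hx₁ hx₂
  · simp
  -- `x = A₁` is split off since `A₂ = A₁` is allowed, and then the quotient is `0 / 0`.
  · rcases (sub_nonneg.2 (not_lt.1 hx₁)).eq_or_lt with hx | hx
    · simp [← hx]
    · exact ⟨by apply div_nonneg <;> linarith, (div_le_one (by linarith)).2 (by linarith)⟩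
  · simp

theorem uniformCdf_of_mem_Icc {A₁ A₂ x : ℝ} (hx : x ∈ Set.Icc A₁ A₂) :
    uniformCdf A₁ A₂ x = (x - A₁) / (A₂ - A₁) := by
  rw [uniformCdf, if_neg hx.1.not_gt, if_pos hx.2]

theorem half_lt_one_sub_uniformCdf {A₁ A₂ x : ℝ} (hx₁ : A₁ ≤ x) (hx₂ : x < (A₁ + A₂) / 2) :
    1 / 2 < 1 - uniformCdf A₁ A₂ x := by
  have hA : 0 < A₂ - A₁ := by linarith
  rw [uniformCdf_of_mem_Icc ⟨hx₁, by linarith⟩, lt_sub_comm, div_lt_iff₀ hA]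
  linarith

theorem intervalIntegral.integral_one_sub_le {f : ℝ → ℝ} {a b : ℝ} (hab : a ≤ b)
    (hf : ∀ x, f x ∈ Set.Icc 0 1) : ∫ x in a..b, (1 - f x) ≤ b - a := by
  have hbound : ∀ x ∈ Set.uIoc a b, ‖1 - f x‖ ≤ 1 := fun x _ ↦ by
    obtain ⟨h₀, h₁⟩ := hf x
    rw [Real.norm_eq_abs, abs_le]
    constructor <;> linarith
  calc ∫ x in a..b, (1 - f x) ≤ ‖∫ x in a..b, (1 - f x)‖ := Real.le_norm_self _
    _ ≤ 1 * |b - a| := intervalIntegral.norm_integral_le_of_norm_le_const hbound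
    _ = b - a := by rw [one_mul, abs_of_nonneg (sub_nonneg.2 hab)]

end

theorem uniform_cdf_small_battery_general (A₁ A₂ : ℝ) (hA₁ : 0 ≤ A₁)
    (F : ℝ → ℝ)
    (hF : ∀ x, F x =
      if x < A₁ then 0 else if x ≤ A₂ then (x - A₁) / (A₂ - A₁) else 1)
    (B : ℝ) (hB₁ : A₁ ≤ B) (hB₂ : B < (A₁ + A₂) / 2) :
    (∫ y in (0 : ℝ)..B, (1 - F y)) ≤ 2 * B * (1 - F B) := by
  obtain rfl : F = uniformCdf A₁ A₂ := funext hF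
  have hB : 0 ≤ B := hA₁.trans hB₁
  calc ∫ y in (0 : ℝ)..B, (1 - uniformCdf A₁ A₂ y)
      ≤ B - 0 := intervalIntegral.integral_one_sub_le hB (uniformCdf_mem_Icc A₁ A₂)
    _ ≤ 2 * B * (1 - uniformCdf A₁ A₂ B) := by
      nlinarith [half_lt_one_sub_uniformCdf hB₁ hB₂]

/-- For the cdf `F` of the uniform distribution on `[A₁, A₂]`
(`0 ≤ A₁ < A₂`) and any `B` with `A₁ ≤ B < (A₁+A₂)/2`:
`∫₀^B (1 − F(y)) dy ≤ 2·B·(1 − F(B))`. -/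
theorem uniform_cdf_small_battery (A₁ A₂ : ℝ) (hA₁ : 0 ≤ A₁) (hA : A₁ < A₂)
    (F : ℝ → ℝ)
    (hF : ∀ x, F x =
      if x < A₁ then 0 else if x ≤ A₂ then (x - A₁) / (A₂ - A₁) else 1)
    (B : ℝ) (hB₁ : A₁ ≤ B) (hB₂ : B < (A₁ + A₂) / 2) :
    (∫ y in (0 : ℝ)..B, (1 - F y)) ≤ 2 * B * (1 - F B) :=
  uniform_cdf_small_battery_general A₁ A₂ hA₁ F hF B hB₁ hB₂
end

section
/- For each real n > 1, define F_n : ℝ → ℝ by 1 − F_n(x) = 1 for x < 1, 1 − F_n(x) = 1/x for 1 ≤ x < n, and 1 − F_n(x) = 0 for x ≥ n. Then ∫₀^n (1 − F_n(y)) dy = 1 + ln n, sup_{0 ≤ x ≤ n} x·(1 − F_n(x)) = 1, and hence (1 + ∫₀^n (1 − F_n(y)) dy) / (1 + sup_{0 ≤ x ≤ n} x·(1 − F_n(x))) = 1 + (ln n)/2, which tends to infinity as n → ∞. -/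
noncomputable def counterCdf (n : ℝ) (x : ℝ) : ℝ :=
  if x < 1 then 0 else if x < n then 1 - 1 / x else 1

open Filter Set

/-- The hypothesis `0 ≤ c` accounts for the junk value `⨆ _ : x ∈ s, f x = 0` at `x ∉ s`. -/
theorem Real.biSup_eq_of_isGreatest {α : Type*} {s : Set α} {f : α → ℝ} {c : ℝ}
    (h : IsGreatest (f '' s) c) (hc : 0 ≤ c) : ⨆ x ∈ s, f x = c := by
  have hle : ∀ x, ⨆ _ : x ∈ s, f x ≤ c := fun x =>
    Real.iSup_le (fun hx => h.2 ⟨x, hx, rfl⟩) hc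
  obtain ⟨a, ha, rfl⟩ := h.1
  refine le_antisymm (Real.iSup_le hle hc) ?_
  exact le_ciSup_of_le ⟨f a, forall_mem_range.2 hle⟩ a
    (ciSup_pos (f := fun _ : a ∈ s => f a) ha).ge

namespace counterCdf

variable {n x : ℝ}

theorem monotone : Monotone (counterCdf n) := by
  intro x y hxy
  unfold counterCdf
  split_ifs
  all_goals first
    | linarith
    | have : 1 / y ≤ 1 / x := one_div_le_one_div_of_le (by linarith) hxy; linarith
    | have : 1 / y ≤ 1 := (div_le_one (by linarith)).2 (by linarith); linarith
    | have : 0 ≤ 1 / x := one_div_nonneg.2 (by linarith); linarith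

theorem one_sub_of_lt_one (hx : x < 1) : 1 - counterCdf n x = 1 := by
  simp [counterCdf, hx]

theorem one_sub_of_mem_Ico (hx : x ∈ Ico 1 n) : 1 - counterCdf n x = x⁻¹ := by
  simp [counterCdf, not_lt.2 hx.1, hx.2]

theorem mul_one_sub_le_one : x * (1 - counterCdf n x) ≤ 1 := by
  rcases lt_or_ge x 1 with hx1 | hx1
  · simpa [one_sub_of_lt_one hx1] using hx1.le
  rcases lt_or_ge x n with hxn | hxn
  · rw [one_sub_of_mem_Ico ⟨hx1, hxn⟩, mul_inv_cancel₀ (by linarith)]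
  · simp [counterCdf, not_lt.2 hx1, not_lt.2 hxn]

theorem integral_one_sub (hn : 1 ≤ n) :
    ∫ y in (0 : ℝ)..n, (1 - counterCdf n y) = 1 + Real.log n := by
  have hint : ∀ a b, IntervalIntegrable (fun y => 1 - counterCdf n y) MeasureTheory.volume a b :=
    fun _ _ => intervalIntegrable_const.sub monotone.intervalIntegrable
  rw [← intervalIntegral.integral_add_adjacent_intervals (hint 0 1) (hint 1 n),
    intervalIntegral.integral_congr_Ioo_of_le zero_le_one
      (g := fun _ => 1) fun y hy => one_sub_of_lt_one hy.2,
    intervalIntegral.integral_congr_Ioo_of_le hn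
      (g := fun y => y⁻¹) fun y hy => one_sub_of_mem_Ico (Ioo_subset_Ico_self hy),
    integral_inv_of_pos one_pos (by linarith)]
  simp

theorem iSup_mul_one_sub (hn : 1 < n) : ⨆ x ∈ Icc (0 : ℝ) n, x * (1 - counterCdf n x) = 1 := by
  refine Real.biSup_eq_of_isGreatest ⟨⟨1, ⟨zero_le_one, hn.le⟩, ?_⟩, ?_⟩ zero_le_one
  · simp [counterCdf, hn]
  · rintro _ ⟨x, -, rfl⟩
    exact mul_one_sub_le_one

end counterCdf

/-- For each `n > 1`, `∫₀^n (1 − F_n(y)) dy = 1 + ln n`,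
`sup_{0 ≤ x ≤ n} x·(1 − F_n(x)) = 1`, hence the ratio
`(1 + ∫₀^n (1 − F_n))/(1 + sup_{0 ≤ x ≤ n} x(1 − F_n(x))) = 1 + (ln n)/2`,
which tends to infinity as `n → ∞`. -/
theorem continuous_counterexample :
    (∀ n : ℝ, 1 < n →
      (∫ y in (0 : ℝ)..n, (1 - counterCdf n y)) = 1 + Real.log n ∧
      (⨆ x ∈ Set.Icc (0 : ℝ) n, x * (1 - counterCdf n x)) = 1 ∧
      (1 + ∫ y in (0 : ℝ)..n, (1 - counterCdf n y)) /
          (1 + ⨆ x ∈ Set.Icc (0 : ℝ) n, x * (1 - counterCdf n x)) =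
        1 + Real.log n / 2) ∧
    Filter.Tendsto (fun n : ℝ =>
        (1 + ∫ y in (0 : ℝ)..n, (1 - counterCdf n y)) /
          (1 + ⨆ x ∈ Set.Icc (0 : ℝ) n, x * (1 - counterCdf n x)))
      Filter.atTop Filter.atTop := by
  have ratio : ∀ n : ℝ, 1 < n →
      (1 + ∫ y in (0 : ℝ)..n, (1 - counterCdf n y)) /
          (1 + ⨆ x ∈ Icc (0 : ℝ) n, x * (1 - counterCdf n x)) = 1 + Real.log n / 2 := by
    intro n hn
    rw [counterCdf.integral_one_sub hn.le, counterCdf.iSup_mul_one_sub hn]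
    ring
  refine ⟨fun n hn => ⟨counterCdf.integral_one_sub hn.le, counterCdf.iSup_mul_one_sub hn,
    ratio n hn⟩, ?_⟩
  refine Tendsto.congr' ((eventually_gt_atTop 1).mono fun n hn => (ratio n hn).symm) ?_
  exact tendsto_atTop_add_const_left _ _ (Real.tendsto_log_atTop.atTop_div_const two_pos)
end

section
/- Let k ≥ 1 be an integer and consider the discrete distribution on {1, 2, …, k} with ℙ(X = i) = 1/i − 1/(i+1) for 1 ≤ i ≤ k−1 and ℙ(X = k) = 1/k, so that ℙ(X ≥ i) = 1/i for 1 ≤ i ≤ k and its cdf F_k satisfies 1 − F_k(y) = 1/i for y ∈ [i−1, i), 1 ≤ i ≤ k, and 1 − F_k(y) = 0 for y ≥ k. Then ∫₀^k (1 − F_k(y)) dy = Σ_{i=1}^k 1/i, max_{1 ≤ i ≤ k} i · ℙ(X ≥ i) = 1, and hence (1 + ∫₀^k (1 − F_k(y)) dy) / (1 + max_{1 ≤ i ≤ k} i · ℙ(X ≥ i)) = (1 + Σ_{i=1}^k 1/i)/2 ≥ (1 + ln(k+1))/2, which tends to infinity as k → ∞. -/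
/-!
The tail `ℙ(X ≥ i) = ∑_{j=i}^k ℙ(X = j)` telescopes to `1/i`, so `i · ℙ(X ≥ i) = 1` for every `i`
and the denominator is `2`. On `[n, n+1)` the survival function `1 - F_k` is the constant
`1/(n+1)`, so its integral over `[0, k]` is the harmonic number `H_k`, and
`H_k ≥ log (k+1) → ∞`.
-/

/-- The cdf `F_k` of the discrete counterexample distribution on `{1, …, k}`:
`1 − F_k(y) = 1/i` for `y ∈ [i−1, i)`, `1 ≤ i ≤ k` (so `1 − F_k(y) = 1/(⌊y⌋+1)`
for `0 ≤ y < k`), and `1 − F_k(y) = 0` for `y ≥ k`. -/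
noncomputable def discreteCounterCdf (k : ℕ) (y : ℝ) : ℝ :=
  if y < 0 then 0 else if y < k then 1 - 1 / ((⌊y⌋₊ : ℝ) + 1) else 1

/-- The probability mass function: `ℙ(X = i) = 1/i − 1/(i+1)` for `1 ≤ i ≤ k−1`
and `ℙ(X = k) = 1/k`. -/
noncomputable def discreteCounterPmf (k : ℕ) (i : ℕ) : ℝ :=
  if i = k then 1 / k else 1 / i - 1 / (i + 1)

open Filter Finset

theorem Finset.ciSup_eq_of_forall_mem_eq {ι α : Type*} [ConditionallyCompleteLinearOrder α]
    {s : Finset ι} {f : ι → α} {c : α} (hs : s.Nonempty) (hc : sSup ∅ ≤ c)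
    (h : ∀ i ∈ s, f i = c) : ⨆ i ∈ s, f i = c := by
  obtain ⟨i, hi, hfi⟩ :=
    mem_image.mp <| s.ciSup_mem_image f <| hs.imp fun i hi => ⟨hi, h i hi ▸ hc⟩
  rw [← hfi, h i hi]

theorem intervalIntegral.integral_zero_natCast_eq_sum {E : Type*} [NormedAddCommGroup E]
    [NormedSpace ℝ E] [CompleteSpace E] {f : ℝ → E} {c : ℕ → E} {k : ℕ}
    (h : ∀ n < k, Set.EqOn f (fun _ => c n) (Set.Ioo (n : ℝ) (n + 1))) :
    ∫ y in (0 : ℝ)..k, f y = ∑ n ∈ range k, c n := by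
  have hpiece (n : ℕ) (hn : n < k) :
      Set.EqOn f (fun _ => c n) (Set.uIoo (n : ℝ) ((n + 1 : ℕ) : ℝ)) := by
    rw [Set.uIoo_of_le (by simp), Nat.cast_succ]
    exact h n hn
  rw [← Nat.cast_zero, ← intervalIntegral.sum_integral_adjacent_intervals fun n hn =>
    intervalIntegrable_const.congr_uIoo (hpiece n hn).symm]
  refine sum_congr rfl fun n hn => ?_
  rw [intervalIntegral.integral_congr_uIoo (hpiece n (mem_range.mp hn)),
    intervalIntegral.integral_const]
  simp

theorem harmonic_eq_sum_Icc_real (n : ℕ) :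
    (harmonic n : ℝ) = ∑ i ∈ Icc 1 n, 1 / (i : ℝ) := by
  simp [harmonic_eq_sum_Icc]

theorem tendsto_harmonic_atTop : Tendsto (fun n : ℕ => (harmonic n : ℝ)) atTop atTop :=
  tendsto_atTop_mono log_add_one_le_harmonic <| Real.tendsto_log_atTop.comp <|
    tendsto_natCast_atTop_atTop.comp (tendsto_add_atTop_nat 1)

theorem discreteCounterPmf_tail_sum {k i : ℕ} (hi : i ≤ k) :
    ∑ j ∈ Icc i k, discreteCounterPmf k j = 1 / (i : ℝ) := by
  rw [← Ico_insert_right hi, sum_insert right_notMem_Ico]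
  have htelescope : ∑ j ∈ Ico i k, discreteCounterPmf k j = 1 / (i : ℝ) - 1 / k := by
    rw [← neg_sub, ← sum_Ico_sub (fun j : ℕ => 1 / (j : ℝ)) hi, ← sum_neg_distrib]
    refine sum_congr rfl fun j hj => ?_
    simp [discreteCounterPmf, (mem_Ico.mp hj).2.ne]
  rw [htelescope, discreteCounterPmf, if_pos rfl]
  ring

theorem one_sub_discreteCounterCdf_eqOn {k n : ℕ} (hn : n < k) :
    Set.EqOn (fun y => 1 - discreteCounterCdf k y) (fun _ => 1 / ((n : ℝ) + 1))
      (Set.Ico (n : ℝ) (n + 1)) := by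
  rintro y ⟨hny, hyn⟩
  have hy : 0 ≤ y := (Nat.cast_nonneg n).trans hny
  have hyk : y < k := hyn.trans_le (by exact_mod_cast hn)
  have hfloor : ⌊y⌋₊ = n := (Nat.floor_eq_iff hy).mpr ⟨hny, hyn⟩
  simp [discreteCounterCdf, hy.not_gt, hyk, hfloor]

theorem integral_one_sub_discreteCounterCdf (k : ℕ) :
    ∫ y in (0 : ℝ)..k, (1 - discreteCounterCdf k y) = harmonic k := by
  rw [intervalIntegral.integral_zero_natCast_eq_sum fun n hn =>
    (one_sub_discreteCounterCdf_eqOn hn).mono Set.Ioo_subset_Ico_self]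
  simp [harmonic]

theorem iSup_mul_discreteCounterPmf_tail_sum {k : ℕ} (hk : 1 ≤ k) :
    ⨆ i ∈ Icc 1 k, (i : ℝ) * ∑ j ∈ Icc i k, discreteCounterPmf k j = 1 := by
  refine ciSup_eq_of_forall_mem_eq ⟨1, mem_Icc.mpr ⟨le_rfl, hk⟩⟩ (by simp) fun i hi => ?_
  obtain ⟨hi1, hik⟩ := mem_Icc.mp hi
  rw [discreteCounterPmf_tail_sum hik, mul_one_div_cancel (by positivity)]

/-- For the discrete distribution with `ℙ(X = i) = 1/i − 1/(i+1)`
(`1 ≤ i ≤ k−1`), `ℙ(X = k) = 1/k`: the tail probabilities satisfy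
`ℙ(X ≥ i) = 1/i`, `∫₀^k (1 − F_k(y)) dy = Σ_{i=1}^k 1/i`,
`max_{1 ≤ i ≤ k} i·ℙ(X ≥ i) = 1`, hence the ratio equals `(1 + Σ_{i=1}^k 1/i)/2`,
which is at least `(1 + ln(k+1))/2` and tends to infinity as `k → ∞`. -/
theorem discrete_counterexample :
    (∀ k : ℕ, 1 ≤ k →
      (∀ i ∈ Finset.Icc 1 k, ∑ j ∈ Finset.Icc i k, discreteCounterPmf k j = 1 / (i : ℝ)) ∧
      (∫ y in (0 : ℝ)..(k : ℝ), (1 - discreteCounterCdf k y)) =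
        ∑ i ∈ Finset.Icc 1 k, (1 / (i : ℝ)) ∧
      (⨆ i ∈ Finset.Icc 1 k, (i : ℝ) * ∑ j ∈ Finset.Icc i k, discreteCounterPmf k j) = 1 ∧
      (1 + ∫ y in (0 : ℝ)..(k : ℝ), (1 - discreteCounterCdf k y)) /
          (1 + ⨆ i ∈ Finset.Icc 1 k, (i : ℝ) * ∑ j ∈ Finset.Icc i k, discreteCounterPmf k j) =
        (1 + ∑ i ∈ Finset.Icc 1 k, (1 / (i : ℝ))) / 2 ∧
      (1 + ∑ i ∈ Finset.Icc 1 k, (1 / (i : ℝ))) / 2 ≥ (1 + Real.log ((k : ℝ) + 1)) / 2) ∧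
    Filter.Tendsto (fun k : ℕ =>
        (1 + ∫ y in (0 : ℝ)..(k : ℝ), (1 - discreteCounterCdf k y)) /
          (1 + ⨆ i ∈ Finset.Icc 1 k, (i : ℝ) * ∑ j ∈ Finset.Icc i k, discreteCounterPmf k j))
      Filter.atTop Filter.atTop := by
  have hratio : ∀ k : ℕ, 1 ≤ k →
      (1 + ∫ y in (0 : ℝ)..(k : ℝ), (1 - discreteCounterCdf k y)) /
          (1 + ⨆ i ∈ Icc 1 k, (i : ℝ) * ∑ j ∈ Icc i k, discreteCounterPmf k j) =
        (1 + harmonic k) / 2 := by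
    intro k hk
    rw [integral_one_sub_discreteCounterCdf, iSup_mul_discreteCounterPmf_tail_sum hk]
    norm_num
  simp only [← harmonic_eq_sum_Icc_real]
  refine ⟨fun k hk => ⟨fun i hi => discreteCounterPmf_tail_sum (mem_Icc.mp hi).2,
    integral_one_sub_discreteCounterCdf k, iSup_mul_discreteCounterPmf_tail_sum hk, hratio k hk,
    ?_⟩, ?_⟩
  · have := log_add_one_le_harmonic k
    push_cast at this
    linarith
  · refine ((tendsto_atTop_add_const_left _ 1 tendsto_harmonic_atTop).atTop_div_const
      two_pos).congr' ?_
    filter_upwards [eventually_ge_atTop 1] with k hk using (hratio k hk).symm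
end
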